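/- Let G and h be nonzero integers. The set of 3×3 integer matrices of the form [[a,0,0],[0,j,0],[0,k,t]] with h(t − j) = kG is closed under matrix multiplication and forms a commutative ring (a unital commutative subring of M₃(ℤ)), free of rank 3 as a ℤ-module. -/

import Mathlib

/-- The shape condition for matrices `[[a,0,0],[0,j,0],[0,k,t]]` with `h(t − j) = kG`. -/
def IsGoodMat (G h : ℤ) (A : Matrix (Fin 3) (Fin 3) ℤ) : Prop :=
  A 0 1 = 0 ∧ A 0 2 = 0 ∧ A 1 0 = 0 ∧ A 1 2 = 0 ∧ A 2 0 = 0 ∧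
    h * (A 2 2 - A 1 1) = A 2 1 * G

/-- Parametrization of good matrices. -/
def gmap (u v : ℤ) : (Fin 3 → ℤ) →ₗ[ℤ] Matrix (Fin 3) (Fin 3) ℤ where
  toFun c := Matrix.of ![![c 0, 0, 0], ![0, c 1, 0], ![0, c 2 * u, c 1 + c 2 * v]]
  map_add' x y := by
    ext i j
    fin_cases i <;> fin_cases j <;>
      simp [Matrix.vecHead, Matrix.vecTail, Function.comp] <;> ring
  map_smul' r x := by
    ext i j
    fin_cases i <;> fin_cases j <;>
      simp [Matrix.vecHead, Matrix.vecTail, Function.comp] <;> ring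

lemma gmap_apply (u v : ℤ) (c : Fin 3 → ℤ) :
    gmap u v c 0 0 = c 0 ∧ gmap u v c 0 1 = 0 ∧ gmap u v c 0 2 = 0 ∧
    gmap u v c 1 0 = 0 ∧ gmap u v c 1 1 = c 1 ∧ gmap u v c 1 2 = 0 ∧
    gmap u v c 2 0 = 0 ∧ gmap u v c 2 1 = c 2 * u ∧ gmap u v c 2 2 = c 1 + c 2 * v := by
  refine ⟨?_, ?_, ?_, ?_, ?_, ?_, ?_, ?_, ?_⟩ <;>
    simp [gmap, Matrix.vecHead, Matrix.vecTail, Function.comp]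

/-- For nonzero integers `G` and `h`, the set of matrices `[[a,0,0],[0,j,0],[0,k,t]]`
with `h(t − j) = kG` contains the identity, is closed under multiplication,
is commutative, and is free of rank `3` as a `ℤ`-module. -/
theorem stmt_8 (G h : ℤ) (hG : G ≠ 0) (hh : h ≠ 0) :
    IsGoodMat G h 1 ∧
    (∀ A B : Matrix (Fin 3) (Fin 3) ℤ, IsGoodMat G h A → IsGoodMat G h B →
      IsGoodMat G h (A * B) ∧ A * B = B * A) ∧
    (∀ N : Submodule ℤ (Matrix (Fin 3) (Fin 3) ℤ),
      (∀ A, A ∈ N ↔ IsGoodMat G h A) →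
      Module.Free ℤ N ∧ Module.finrank ℤ N = 3) := by
  refine ⟨?_, ?_, ?_⟩
  · refine ⟨?_, ?_, ?_, ?_, ?_, ?_⟩ <;> simp [Matrix.one_apply]
  · intro A B hA hB
    obtain ⟨a1, a2, a3, a4, a5, a6⟩ := hA
    obtain ⟨b1, b2, b3, b4, b5, b6⟩ := hB
    have key : A 2 1 * B 1 1 + A 2 2 * B 2 1 = B 2 1 * A 1 1 + B 2 2 * A 2 1 := by
      have : h * (A 2 1 * B 1 1 + A 2 2 * B 2 1) =
          h * (B 2 1 * A 1 1 + B 2 2 * A 2 1) := by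
        linear_combination B 2 1 * a6 - A 2 1 * b6
      exact mul_left_cancel₀ hh this
    constructor
    · refine ⟨?_, ?_, ?_, ?_, ?_, ?_⟩ <;>
        simp only [Matrix.mul_apply, Fin.sum_univ_three, a1, a2, a3, a4, a5,
          b1, b2, b3, b4, b5, mul_zero, zero_mul, add_zero, zero_add]
      linear_combination B 2 2 * a6 + A 1 1 * b6 - G * key
    · ext i j
      fin_cases i <;> fin_cases j <;>
        simp only [Fin.zero_eta, Fin.mk_one, Fin.isValue, Matrix.mul_apply,
          Fin.sum_univ_three, a1, a2, a3, a4, a5,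
          b1, b2, b3, b4, b5, mul_zero, zero_mul, add_zero, zero_add] <;>
        first
        | ring1
        | linear_combination key
        | skip
      all_goals
        simp only [show (⟨2, by norm_num⟩ : Fin 3) = 2 from rfl, Matrix.mul_apply,
          Fin.sum_univ_three, a1, a2, a3, a4, a5,
          b1, b2, b3, b4, b5, mul_zero, zero_mul, add_zero, zero_add]
      all_goals first | ring1 | linear_combination key
  · intro N hN
    set d : ℤ := (Int.gcd G h : ℤ) with hd_def
    have hdnat : Int.gcd G h ≠ 0 := fun h0 => hG (Int.gcd_eq_zero_iff.mp h0).1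
    have hd : d ≠ 0 := by rw [hd_def]; exact Int.natCast_ne_zero.mpr hdnat
    set u : ℤ := h / d with hu_def
    set v : ℤ := G / d with hv_def
    have hdh : d ∣ h := Int.gcd_dvd_right G h
    have hdG : d ∣ G := Int.gcd_dvd_left G h
    have hhu : h = d * u := by
      rw [hu_def, Int.mul_ediv_cancel' hdh]
    have hGv : G = d * v := by
      rw [hv_def, Int.mul_ediv_cancel' hdG]
    have hu0 : u ≠ 0 := by
      intro h0
      rw [h0, mul_zero] at hhu
      exact hh hhu
    have hcop : IsCoprime u v := by
      rw [Int.isCoprime_iff_gcd_eq_one, Int.gcd_comm]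
      exact Int.gcd_div_gcd_div_gcd (Int.gcd_pos_iff.mpr (Or.inl hG))
    have hmem : ∀ c : Fin 3 → ℤ, gmap u v c ∈ N := by
      intro c
      rw [hN]
      obtain ⟨g1, g2, g3, g4, g5, g6, g7, g8, g9⟩ := gmap_apply u v c
      refine ⟨g2, g3, g4, g6, g7, ?_⟩
      rw [g5, g8, g9]
      linear_combination c 2 * v * hhu - c 2 * u * hGv
    let e : (Fin 3 → ℤ) →ₗ[ℤ] N := LinearMap.codRestrict N (gmap u v) hmem
    have hinj : Function.Injective e := by
      intro x y hxy
      have hxy' : gmap u v x = gmap u v y := congrArg Subtype.val hxy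
      obtain ⟨x1, _, _, _, x5, _, _, x8, _⟩ := gmap_apply u v x
      obtain ⟨y1, _, _, _, y5, _, _, y8, _⟩ := gmap_apply u v y
      funext i
      fin_cases i
      · have := congrFun (congrFun hxy' 0) 0
        rw [x1, y1] at this
        exact this
      · have := congrFun (congrFun hxy' 1) 1
        rw [x5, y5] at this
        exact this
      · have := congrFun (congrFun hxy' 2) 1
        rw [x8, y8] at this
        exact mul_right_cancel₀ hu0 this
    have hsurj : Function.Surjective e := by
      rintro ⟨A, hA⟩
      obtain ⟨a1, a2, a3, a4, a5, a6⟩ := (hN A).mp hA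
      have h6' : u * (A 2 2 - A 1 1) = A 2 1 * v := by
        have : d * (u * (A 2 2 - A 1 1)) = d * (A 2 1 * v) := by
          linear_combination a6 + (A 1 1 - A 2 2) * hhu + A 2 1 * hGv
        exact mul_left_cancel₀ hd this
      have hdvd : u ∣ A 2 1 := hcop.dvd_of_dvd_mul_right ⟨A 2 2 - A 1 1, h6'.symm⟩
      obtain ⟨m, hm⟩ := hdvd
      have ht : A 2 2 = A 1 1 + m * v := by
        have h2 : u * (A 2 2 - A 1 1) = u * (m * v) := by rw [h6', hm]; ring
        have := mul_left_cancel₀ hu0 h2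
        linarith
      refine ⟨![A 0 0, A 1 1, m], Subtype.ext ?_⟩
      show gmap u v _ = A
      obtain ⟨g1, g2, g3, g4, g5, g6, g7, g8, g9⟩ := gmap_apply u v ![A 0 0, A 1 1, m]
      simp only [Matrix.cons_val_zero, Matrix.cons_val_one, Matrix.head_cons,
        Matrix.cons_val_two, Matrix.tail_cons] at g1 g5 g8 g9
      ext i j
      fin_cases i <;> fin_cases j <;>
        simp only [Fin.zero_eta, Fin.mk_one, Fin.isValue,
          show (⟨2, by omega⟩ : Fin 3) = 2 from rfl,
          g1, g2, g3, g4, g5, g6, g7, g8, g9, a1, a2, a3, a4, a5] <;>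
        simp [hm, ht, mul_comm]
    let eq := LinearEquiv.ofBijective e ⟨hinj, hsurj⟩
    constructor
    · exact Module.Free.of_equiv eq
    · rw [← eq.finrank_eq]
      simp
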